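/- Suppose the polyhedron P is generic. Then for every x ∈ U(K_P) = {x ∈ ℝ^m : {i : x_i = 0} ∈ K_P}, the V-orbit {v • x : v ∈ V} of the exponential action contains exactly one point y with μ(y) = δ, that is, exactly one point of the nondegenerate intersection of quadrics {y ∈ ℝ^m : Σ_{i=1}^m γ_i y_i² = δ}. -/

import Mathlib

/-!
Pick `w₀ ∈ P` on whose facets the zero set of `x` lies and put `c = a(w₀) + b ≥ 0`; since
`Σ vᵢ aᵢ = 0` on `V`, the functionals `δ` and `⟨c, ·⟩` agree on `V`, and `cᵢ = 0` wherever
`xᵢ = 0`. The orbit points `eᵛ x` with `μ = δ` are then exactly those where `v` is a critical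
point on `V` of the Kempf–Ness function `f(v) = ½ Σ xᵢ² e^{2vᵢ} − Σ cᵢ vᵢ`.

Genericity at `w₀` says that no nonzero `v ∈ V` is supported on `{i : cᵢ = 0}`. Hence along
every nonzero direction of `V` either some `vᵢ > 0` with `xᵢ ≠ 0` (exponential growth) or
`−⟨c, v⟩ > 0` (linear growth); by compactness of the unit sphere `f` grows linearly on `V`
and attains its minimum. Uniqueness holds because `t ↦ (eᵗ xᵢ)²` is monotone, strictly so
when `xᵢ ≠ 0`.
-/

open Real Finset Filter

theorem exists_pos_mul_norm_le_of_pos_homogeneous {E : Type*} [NormedAddCommGroup E]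
    [NormedSpace ℝ E] [FiniteDimensional ℝ E] {F : E → ℝ} (hF : Continuous F)
    (hhom : ∀ t : ℝ, 0 ≤ t → ∀ v, F (t • v) = t * F v) (hpos : ∀ v ≠ 0, 0 < F v) :
    ∃ ε > 0, ∀ v, ε * ‖v‖ ≤ F v := by
  have hF0 : F 0 = 0 := by simpa using hhom 0 le_rfl 0
  rcases subsingleton_or_nontrivial E with hE | hE
  · exact ⟨1, one_pos, fun v => by simp [Subsingleton.elim v 0, hF0]⟩
  obtain ⟨v₁, hv₁, hmin⟩ := (isCompact_sphere (0 : E) 1).exists_isMinOn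
    (NormedSpace.sphere_nonempty.2 zero_le_one) hF.continuousOn
  have hv₁ : ‖v₁‖ = 1 := mem_sphere_zero_iff_norm.1 hv₁
  refine ⟨F v₁, hpos v₁ (norm_ne_zero_iff.1 (by simp [hv₁])), fun v => ?_⟩
  rcases eq_or_ne v 0 with rfl | hv
  · simp [hF0]
  have hn : 0 < ‖v‖ := norm_pos_iff.2 hv
  have hu : ‖v‖⁻¹ • v ∈ Metric.sphere (0 : E) 1 := by
    rw [mem_sphere_zero_iff_norm, norm_smul, norm_inv, norm_norm, inv_mul_cancel₀ hn.ne']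
  calc F v₁ * ‖v‖ ≤ F (‖v‖⁻¹ • v) * ‖v‖ := mul_le_mul_of_nonneg_right (hmin hu) hn.le
    _ = F v := by
      rw [hhom _ (inv_nonneg.2 hn.le), mul_comm, ← mul_assoc, mul_inv_cancel₀ hn.ne', one_mul]

theorem LinearIndependent.eq_zero_of_sum_smul_eq_zero {ι R M : Type*} [Fintype ι] [Ring R]
    [AddCommGroup M] [Module R M] {f : ι → M} {p : ι → Prop}
    (hli : LinearIndependent R (fun i : {i // p i} => f i)) {v : ι → R}
    (hsum : ∑ i, v i • f i = 0) (hv : ∀ i, ¬ p i → v i = 0) : v = 0 := by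
  classical
  have hsub : ∑ i : {i // p i}, v i • f i = 0 := by
    have hnot : ∑ i : {i // ¬ p i}, v i • f i = 0 :=
      Finset.sum_eq_zero fun i _ => by simp [hv i i.2]
    rwa [← Fintype.sum_subtype_add_sum_subtype p, hnot, add_zero] at hsum
  funext i
  by_cases hi : p i
  · exact Fintype.linearIndependent_iff.1 hli _ hsub ⟨i, hi⟩
  · exact hv i hi

theorem sub_mul_sub_nonneg_of_monotone {f : ℝ → ℝ} (hf : Monotone f) (a b : ℝ) :
    0 ≤ (f a - f b) * (a - b) := by
  rcases le_total a b with h | h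
  · exact mul_nonneg_of_nonpos_of_nonpos (sub_nonpos.2 (hf h)) (sub_nonpos.2 h)
  · exact mul_nonneg (sub_nonneg.2 (hf h)) (sub_nonneg.2 h)

theorem sub_mul_sub_pos_of_strictMono {f : ℝ → ℝ} (hf : StrictMono f) {a b : ℝ} (hab : a ≠ b) :
    0 < (f a - f b) * (a - b) := by
  rcases hab.lt_or_gt with h | h
  · exact mul_pos_of_neg_of_neg (sub_neg.2 (hf h)) (sub_neg.2 h)
  · exact mul_pos (sub_pos.2 (hf h)) (sub_pos.2 h)

theorem monotone_sq_exp_mul (x : ℝ) : Monotone fun t => (exp t * x) ^ 2 := fun a b h => by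
  simp only [mul_pow]
  gcongr

theorem strictMono_sq_exp_mul {x : ℝ} (hx : x ≠ 0) : StrictMono fun t => (exp t * x) ^ 2 :=
  fun a b h => by
    simp only [mul_pow]
    gcongr

theorem sq_exp_mul (t x : ℝ) : (exp t * x) ^ 2 = x ^ 2 * exp (2 * t) := by
  rw [mul_pow, ← exp_nat_mul]
  ring_nf

theorem mul_max_zero_le_exp (K t : ℝ) : K * max t 0 ≤ exp (2 * t) / 2 + 2 * K ^ 2 := by
  rcases le_or_gt t 0 with h | h
  · rw [max_eq_right h, mul_zero]
    positivity
  · rw [max_eq_left h.le, show 2 * t = t + t by ring, exp_add]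
    nlinarith [add_one_le_exp t, sq_nonneg (t - 2 * K), exp_pos t]

section KempfNess

variable {ι : Type*} [Fintype ι] (x c : ι → ℝ)

/-- The Kempf–Ness function `½ ‖eᵛ x‖² − ⟨c, v⟩` of the exponential action. -/
noncomputable def kempfNess (v : ι → ℝ) : ℝ := ∑ i, (x i ^ 2 * exp (2 * v i) / 2 - c i * v i)

/-- Positively homogeneous; it controls the growth of `kempfNess x c` at infinity. -/
def kempfNessGrowth (v : ι → ℝ) : ℝ := max (∑ i, x i ^ 2 * max (v i) 0) (-∑ i, c i * v i)

theorem continuous_kempfNess : Continuous (kempfNess x c) := by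
  unfold kempfNess
  fun_prop

theorem continuous_kempfNessGrowth : Continuous (kempfNessGrowth x c) :=
  (continuous_finsetSum _ fun i _ => by fun_prop).max (by fun_prop)

theorem kempfNessGrowth_smul {t : ℝ} (ht : 0 ≤ t) (v : ι → ℝ) :
    kempfNessGrowth x c (t • v) = t * kempfNessGrowth x c v := by
  have hmax : ∀ s : ℝ, max (t * s) 0 = t * max s 0 := fun s => by
    rw [mul_max_of_nonneg _ _ ht, mul_zero]
  simp only [kempfNessGrowth, Pi.smul_apply, smul_eq_mul, hmax, mul_max_of_nonneg _ _ ht,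
    mul_sum, mul_neg, mul_left_comm t]

theorem mul_sum_sq_mul_max_zero_sub_le_kempfNess (K : ℝ) (v : ι → ℝ) :
    K * ∑ i, x i ^ 2 * max (v i) 0 - ∑ i, c i * v i - 2 * K ^ 2 * ∑ i, x i ^ 2
      ≤ kempfNess x c v := by
  simp only [kempfNess, mul_sum, ← sum_sub_distrib]
  refine sum_le_sum fun i _ => ?_
  nlinarith [mul_max_zero_le_exp K (v i), sq_nonneg (x i)]

theorem hasDerivAt_kempfNess_add_smul (v u : ι → ℝ) :
    HasDerivAt (fun t : ℝ => kempfNess x c (v + t • u))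
      (∑ i, (x i ^ 2 * exp (2 * v i) - c i) * u i) 0 := by
  simp only [kempfNess, Pi.add_apply, Pi.smul_apply, smul_eq_mul]
  apply HasDerivAt.fun_sum
  intro i _
  have hline : HasDerivAt (fun t : ℝ => v i + t * u i) (u i) 0 := by
    simpa using ((hasDerivAt_id (0 : ℝ)).mul_const (u i)).const_add (v i)
  have hexp := ((hline.const_mul 2).exp.const_mul (x i ^ 2)).div_const 2
  convert hexp.fun_sub (hline.const_mul (c i)) using 1
  simp only [zero_mul, add_zero]
  ring

/-- `μ(eᵛ x) = ⟨c, ·⟩` as functionals on `V`. -/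
def SolvesMomentMap (V : Submodule ℝ (ι → ℝ)) (v : ι → ℝ) : Prop :=
  ∀ u ∈ V, ∑ i, (exp (v i) * x i) ^ 2 * u i = ∑ i, c i * u i

variable {x c} (V : Submodule ℝ (ι → ℝ))

theorem IsMinOn.solvesMomentMap {v : ι → ℝ} (hv : v ∈ V)
    (hmin : IsMinOn (kempfNess x c) V v) : SolvesMomentMap x c V v := by
  intro u hu
  have hloc : IsLocalMin (fun t : ℝ => kempfNess x c (v + t • u)) 0 :=
    Eventually.of_forall fun t => by
      simpa using hmin (V.add_mem hv (V.smul_mem t hu))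
  have hcrit := hloc.hasDerivAt_eq_zero (hasDerivAt_kempfNess_add_smul x c v u)
  simp only [sub_mul, sum_sub_distrib, sub_eq_zero] at hcrit
  simpa only [sq_exp_mul] using hcrit

theorem SolvesMomentMap.exp_mul_eq {v v' : ι → ℝ} (hv : v ∈ V) (hv' : v' ∈ V)
    (h : SolvesMomentMap x c V v) (h' : SolvesMomentMap x c V v') :
    (fun i => exp (v i) * x i) = fun i => exp (v' i) * x i := by
  set g : ι → ℝ → ℝ := fun i t => (exp t * x i) ^ 2
  have hzero : ∑ i, (g i (v i) - g i (v' i)) * (v i - v' i) = 0 := by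
    have := (h _ (V.sub_mem hv hv')).trans (h' _ (V.sub_mem hv hv')).symm
    simp only [sub_mul, sum_sub_distrib, Pi.sub_apply, mul_sub] at this ⊢
    linarith
  have hterm := (sum_eq_zero_iff_of_nonneg fun i _ =>
    sub_mul_sub_nonneg_of_monotone (monotone_sq_exp_mul (x i)) (v i) (v' i)).1 hzero
  funext i
  rcases eq_or_ne (x i) 0 with hx | hx
  · simp [hx]
  by_contra hne
  have hvi : v i ≠ v' i := fun hvi => hne (by rw [hvi])
  exact (sub_mul_sub_pos_of_strictMono (strictMono_sq_exp_mul hx) hvi).ne'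
    (hterm i (mem_univ i))

variable {V} (hc : 0 ≤ c) (hxc : ∀ i, x i = 0 → c i = 0)
  (hsupp : ∀ v ∈ V, (∀ i, c i ≠ 0 → v i = 0) → v = 0)
include hc hxc hsupp

theorem kempfNessGrowth_pos {v : ι → ℝ} (hv : v ∈ V) (hv0 : v ≠ 0) :
    0 < kempfNessGrowth x c v := by
  by_contra! hle
  obtain ⟨hA, hB⟩ := max_le_iff.1 hle
  have hA0 := (sum_eq_zero_iff_of_nonneg fun i _ => by positivity).1
    (le_antisymm hA (sum_nonneg fun i _ => by positivity))
  have hcv : ∀ i ∈ univ, c i * v i ≤ 0 := fun i _ => by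
    rcases eq_or_ne (x i) 0 with hx | hx
    · simp [hxc i hx]
    · have : max (v i) 0 = 0 := by simpa [hx] using hA0 i (mem_univ i)
      exact mul_nonpos_of_nonneg_of_nonpos (hc i) (max_eq_right_iff.1 this)
  have hcv0 := (sum_eq_zero_iff_of_nonpos hcv).1 (le_antisymm (sum_nonpos hcv) (by linarith))
  exact hv0 (hsupp v hv fun i hci => (mul_eq_zero.1 (hcv0 i (mem_univ i))).resolve_left hci)

theorem exists_mul_norm_sub_le_kempfNess :
    ∃ ε > 0, ∃ C, ∀ v ∈ V, ε * ‖v‖ - C ≤ kempfNess x c v := by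
  obtain ⟨ε, hε, hgrowth⟩ := exists_pos_mul_norm_le_of_pos_homogeneous
    (F := fun v : V => kempfNessGrowth x c v)
    ((continuous_kempfNessGrowth x c).comp continuous_subtype_val)
    (fun t ht v => kempfNessGrowth_smul x c ht v)
    (fun v hv => kempfNessGrowth_pos hc hxc hsupp v.2 (by simpa using hv))
  -- `K ε = Σ cᵢ + ε` makes `K · Σ xᵢ² max(vᵢ, 0) − ⟨c, v⟩ ≥ ε ‖v‖` in both cases of the max.
  set K := (∑ i, c i + ε) / ε
  refine ⟨ε, hε, 2 * K ^ 2 * ∑ i, x i ^ 2, fun v hv => ?_⟩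
  have hbound := mul_sum_sq_mul_max_zero_sub_le_kempfNess x c K v
  have hA : 0 ≤ ∑ i, x i ^ 2 * max (v i) 0 := sum_nonneg fun i _ => by positivity
  have hB : ∑ i, c i * v i ≤ (∑ i, c i) * ‖v‖ := by
    rw [sum_mul]
    exact sum_le_sum fun i _ => mul_le_mul_of_nonneg_left
      ((le_abs_self _).trans (norm_le_pi_norm v i)) (hc i)
  have hK : K * ε = ∑ i, c i + ε := div_mul_cancel₀ _ hε.ne'
  have hK0 : 0 ≤ K := div_nonneg (add_nonneg (sum_nonneg fun i _ => hc i) hε.le) hε.le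
  have hg : ε * ‖v‖ ≤ kempfNessGrowth x c v := hgrowth ⟨v, hv⟩
  rcases le_max_iff.1 hg with hgA | hgB
  · nlinarith [mul_le_mul_of_nonneg_left hgA hK0]
  · nlinarith [mul_nonneg hK0 hA]

theorem exists_isMinOn_kempfNess : ∃ v ∈ V, IsMinOn (kempfNess x c) V v := by
  obtain ⟨ε, hε, C, hbound⟩ := exists_mul_norm_sub_le_kempfNess hc hxc hsupp
  have htends : Tendsto (fun v : V => kempfNess x c v) (cocompact V) atTop :=
    tendsto_atTop_mono (fun v => by simpa [sub_eq_add_neg] using hbound v v.2)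
      (tendsto_atTop_add_const_right _ (-C) (tendsto_norm_cocompact_atTop.const_mul_atTop hε))
  obtain ⟨v, hv⟩ := ((continuous_kempfNess x c).comp continuous_subtype_val).exists_forall_le
    htends
  exact ⟨v, v.2, fun w hw => hv ⟨w, hw⟩⟩

theorem existsUnique_sq_exp_mul_eq :
    ∃! y : ι → ℝ, (∃ v ∈ V, ∀ i, exp (v i) * x i = y i) ∧
      ∀ u ∈ V, ∑ i, y i ^ 2 * u i = ∑ i, c i * u i := by
  obtain ⟨v, hv, hmin⟩ := exists_isMinOn_kempfNess hc hxc hsupp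
  refine ⟨fun i => exp (v i) * x i, ⟨⟨v, hv, fun i => rfl⟩, hmin.solvesMomentMap V hv⟩, ?_⟩
  rintro y ⟨⟨v', hv', hy'⟩, hy⟩
  obtain rfl : (fun i => exp (v' i) * x i) = y := funext hy'
  exact SolvesMomentMap.exp_mul_eq V hv' hv hy (hmin.solvesMomentMap V hv)

end KempfNess

theorem sum_smul_eq_sum_smul_iff {ι : Type*} [Fintype ι] {V : Submodule ℝ (ι → ℝ)}
    {γ : ι → V →L[ℝ] ℝ} (hγ : ∀ (i : ι) (v : V), γ i v = (v : ι → ℝ) i) (f g : ι → ℝ) :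
    ∑ i, f i • γ i = ∑ i, g i • γ i ↔ ∀ u ∈ V, ∑ i, f i * u i = ∑ i, g i * u i := by
  simp only [ContinuousLinearMap.ext_iff, _root_.sum_apply,
    smul_apply, smul_eq_mul, hγ, Subtype.forall]

theorem stmt12_general {W : Type*} [NormedAddCommGroup W] [NormedSpace ℝ W]
    {m : ℕ} (a : Fin m → (W →L[ℝ] ℝ)) (b : Fin m → ℝ)
    (hgen : ∀ w ∈ {w : W | ∀ i, 0 ≤ a i w + b i},
      LinearIndependent ℝ (fun i : {i : Fin m // a i w + b i = 0} => a i.1))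
    (V : Submodule ℝ (Fin m → ℝ))
    (hV : ∀ y : Fin m → ℝ, y ∈ V ↔ ∑ i, y i • a i = 0)
    (γ : Fin m → (V →L[ℝ] ℝ))
    (hγ : ∀ (i : Fin m) (v : V), γ i v = (v : Fin m → ℝ) i)
    (x : Fin m → ℝ)
    (hx : {i | x i = 0} ∈ {I : Set (Fin m) |
        ∃ w : W, (∀ j, 0 ≤ a j w + b j) ∧ ∀ i ∈ I, a i w + b i = 0}) :
    ∃! y : Fin m → ℝ,
      (∃ v ∈ V, ∀ i, Real.exp (v i) * x i = y i) ∧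
        ∑ i, y i ^ 2 • γ i = ∑ i, b i • γ i := by
  obtain ⟨w₀, hw₀, hzero⟩ := hx
  have hδ : ∀ u ∈ V, ∑ i, b i * u i = ∑ i, (a i w₀ + b i) * u i := fun u hu => by
    have hu := congrArg (fun f : W →L[ℝ] ℝ => f w₀) ((hV u).1 hu)
    simp only [_root_.sum_apply, smul_apply, smul_eq_mul, zero_apply] at hu
    simp only [add_mul, sum_add_distrib, mul_comm (a _ w₀), hu, zero_add]
  have hsupp : ∀ v ∈ V, (∀ i, a i w₀ + b i ≠ 0 → v i = 0) → v = 0 := fun v hv hv0 =>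
    (hgen w₀ hw₀).eq_zero_of_sum_smul_eq_zero ((hV v).1 hv) hv0
  have hmoment : ∀ y : Fin m → ℝ, ∑ i, y i ^ 2 • γ i = ∑ i, b i • γ i ↔
      ∀ u ∈ V, ∑ i, y i ^ 2 * u i = ∑ i, (a i w₀ + b i) * u i := fun y => by
    rw [sum_smul_eq_sum_smul_iff hγ]
    exact forall₂_congr fun u hu => by rw [hδ u hu]
  simpa only [hmoment] using existsUnique_sq_exp_mul_eq hw₀ (fun i hi => hzero i hi) hsupp

/-- If the polyhedron
`P = {w : a i w + b i ≥ 0, i = 1,…,m}` is generic, then for every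
`x ∈ U(K_P)` the `V`-orbit of `x` under the exponential action
`v • x = (e^{v₁} x₁, …, e^{v_m} x_m)` contains exactly one point `y` of the
intersection of quadrics `Σ γ i • y i ^ 2 = δ`. -/
theorem stmt12 {W : Type*} [NormedAddCommGroup W] [NormedSpace ℝ W]
    [FiniteDimensional ℝ W] {m : ℕ} (a : Fin m → (W →L[ℝ] ℝ))
    (hspan : Submodule.span ℝ (Set.range a) = ⊤) (b : Fin m → ℝ)
    (hPne : {w : W | ∀ i, 0 ≤ a i w + b i}.Nonempty)
    (hgen : ∀ w ∈ {w : W | ∀ i, 0 ≤ a i w + b i},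
      LinearIndependent ℝ (fun i : {i : Fin m // a i w + b i = 0} => a i.1))
    (V : Submodule ℝ (Fin m → ℝ))
    (hV : ∀ y : Fin m → ℝ, y ∈ V ↔ ∑ i, y i • a i = 0)
    (γ : Fin m → (V →L[ℝ] ℝ))
    (hγ : ∀ (i : Fin m) (v : V), γ i v = (v : Fin m → ℝ) i)
    (x : Fin m → ℝ)
    (hx : {i | x i = 0} ∈ {I : Set (Fin m) |
        ∃ w : W, (∀ j, 0 ≤ a j w + b j) ∧ ∀ i ∈ I, a i w + b i = 0}) :
    ∃! y : Fin m → ℝ,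
      (∃ v ∈ V, ∀ i, Real.exp (v i) * x i = y i) ∧
        ∑ i, y i ^ 2 • γ i = ∑ i, b i • γ i :=
  stmt12_general a b hgen V hV γ hγ x hx
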